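/- Let P be an orthogonal lub-complete poset and → any one of the implications →_C, →_K, →_N, →_S, →_D. Then the modus ponens rule (for all x, y, u, v: x ≤ y and x → y ≤ u → v imply u ≤ v) holds if and only if the order property (for all x, y: x ≤ y ⇔ x → y = {1}) holds. Here A ≤ B for sets means a ≤ b for all a ∈ A, b ∈ B. -/
import Mathlib


open Set

variable {P : Type*} [PartialOrder P] [BoundedOrder P]

/-- Maximal elements of a subset of a poset. -/
def MaxE (A : Set P) : Set P := {m | m ∈ A ∧ ∀ x ∈ A, m ≤ x → x = m}

/-- Minimal elements of a subset of a poset. -/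
def MinE (A : Set P) : Set P := {m | m ∈ A ∧ ∀ x ∈ A, x ≤ m → x = m}

/-- `c` is an antitone involution. -/
def HasAntitoneInvol (c : P → P) : Prop :=
  (∀ x y : P, x ≤ y → c y ≤ c x) ∧ ∀ x : P, c (c x) = x

/-- Orthogonality: the join of two orthogonal elements exists. -/
def IsOrthogonalPoset (c : P → P) : Prop :=
  ∀ x y : P, x ≤ c y → ∃ z, IsLUB {x, y} z

/-- lub-complete (together with its dual, mub-complete): every lower bound of a
finite set lies below a maximal lower bound, and dually. -/
def IsLubComplete : Prop :=
  (∀ A : Set P, A.Finite → ∀ x ∈ lowerBounds A, ∃ m ∈ MaxE (lowerBounds A), x ≤ m) ∧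
  (∀ A : Set P, A.Finite → ∀ x ∈ upperBounds A, ∃ m ∈ MinE (upperBounds A), m ≤ x)

/-- Distributivity of a poset via the LU-identity L(U(x,y),z) = LU(L(x,z),L(y,z)). -/
def IsDistribPoset : Prop :=
  ∀ x y z : P, lowerBounds (upperBounds {x, y} ∪ {z}) =
    lowerBounds (upperBounds (lowerBounds ({x, z} : Set P) ∪ lowerBounds ({y, z} : Set P)))

/-- `c x` is a complement of `x`: L(x, x') = L(P) and U(x, x') = U(P). -/
def IsComplementedBy (c : P → P) : Prop :=
  ∀ x : P, lowerBounds ({x, c x} : Set P) = lowerBounds (univ : Set P) ∧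
    upperBounds ({x, c x} : Set P) = upperBounds (univ : Set P)

/-- Orthocomplemented: x ∨ x' = 1 for all x. -/
def IsOrthocomplemented (c : P → P) : Prop := ∀ x : P, IsLUB {x, c x} ⊤

/-- Paraorthomodular: x ≤ y and x' ∧ y = 0 imply x = y. -/
def IsParaOM (c : P → P) : Prop :=
  ∀ x y : P, x ≤ y → IsGLB {c x, y} ⊥ → x = y

/-- Orthomodular poset: orthogonal and x ≤ y implies x ∨ (y ∧ x') = y. -/
def IsOM (c : P → P) : Prop :=
  IsOrthogonalPoset c ∧ ∀ x y : P, x ≤ y → ∃ m, IsGLB {y, c x} m ∧ IsLUB {x, m} y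

/-- Weakly Boolean: x ∧ y = 0 and x ∧ y' = 0 imply x = 0. -/
def IsWeaklyBoolean (c : P → P) : Prop :=
  ∀ x y : P, IsGLB {x, y} ⊥ → IsGLB {x, c y} ⊥ → x = ⊥

/-- Classical implication x →_C y := Min U(x', y). -/
def impC (c : P → P) (x y : P) : Set P := MinE (upperBounds ({c x, y} : Set P))

/-- Sasaki implication x →_S y := x' ∨ Max L(x, y). -/
def impS (c : P → P) (x y : P) : Set P :=
  {z | ∃ w ∈ MaxE (lowerBounds ({x, y} : Set P)), IsLUB {c x, w} z}

/-- Dishkant implication x →_D y := y ∨ Max L(x', y'). -/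
def impD (c : P → P) (x y : P) : Set P :=
  {z | ∃ w ∈ MaxE (lowerBounds ({c x, c y} : Set P)), IsLUB {y, w} z}

/-- Kalmbach implication
x →_K y := Max L(x',y) ∨ Max L(x',y') ∨ (x ∧ Min U(x',y)). -/
def impK (c : P → P) (x y : P) : Set P :=
  {z | ∃ a ∈ MaxE (lowerBounds ({c x, y} : Set P)),
       ∃ b ∈ MaxE (lowerBounds ({c x, c y} : Set P)),
       ∃ u ∈ MinE (upperBounds ({c x, y} : Set P)),
       ∃ m, IsGLB {x, u} m ∧ IsLUB {a, b, m} z}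

/-- Non-tolens implication x →_N y := y' →_K x'. -/
def impN (c : P → P) (x y : P) : Set P := impK c (c y) (c x)

section Helpers

variable {c : P → P}

lemma mem_lb_pair {a b t : P} : t ∈ lowerBounds ({a, b} : Set P) ↔ t ≤ a ∧ t ≤ b := by
  simp [lowerBounds]

lemma mem_ub_pair {a b t : P} : t ∈ upperBounds ({a, b} : Set P) ↔ a ≤ t ∧ b ≤ t := by
  simp [upperBounds]

lemma maxE_pair {a b : P} (h : a ≤ b) :
    MaxE (lowerBounds ({a, b} : Set P)) = ({a} : Set P) := by
  ext m
  constructor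
  · rintro ⟨hm, hmax⟩
    exact Set.mem_singleton_iff.2 ((hmax a (mem_lb_pair.2 ⟨le_rfl, h⟩) (mem_lb_pair.1 hm).1).symm)
  · rintro rfl
    exact ⟨mem_lb_pair.2 ⟨le_rfl, h⟩, fun w hw hle => le_antisymm (mem_lb_pair.1 hw).1 hle⟩

lemma maxE_pair' {a b : P} (h : b ≤ a) :
    MaxE (lowerBounds ({a, b} : Set P)) = ({b} : Set P) := by
  rw [Set.pair_comm]; exact maxE_pair h

lemma minE_pair {a b : P} (h : a ≤ b) :
    MinE (upperBounds ({a, b} : Set P)) = ({b} : Set P) := by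
  ext m
  constructor
  · rintro ⟨hm, hmin⟩
    exact Set.mem_singleton_iff.2 ((hmin b (mem_ub_pair.2 ⟨h, le_rfl⟩) (mem_ub_pair.1 hm).2).symm)
  · rintro rfl
    exact ⟨mem_ub_pair.2 ⟨h, le_rfl⟩, fun w hw hle => le_antisymm hle (mem_ub_pair.1 hw).2⟩

lemma minE_pair' {a b : P} (h : b ≤ a) :
    MinE (upperBounds ({a, b} : Set P)) = ({a} : Set P) := by
  rw [Set.pair_comm]; exact minE_pair h

lemma c_top (hinv : HasAntitoneInvol c) : c (⊤ : P) = ⊥ := by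
  have h := hinv.1 (c ⊥) ⊤ le_top
  rw [hinv.2] at h
  exact le_antisymm h bot_le

lemma c_bot (hinv : HasAntitoneInvol c) : c (⊥ : P) = ⊤ := by
  have h := hinv.1 ⊥ (c ⊤) bot_le
  rw [hinv.2] at h
  exact le_antisymm le_top h

lemma isLUB_pair_of_le {a b : P} (h : a ≤ b) : IsLUB ({a, b} : Set P) b := by
  constructor
  · rintro t (rfl | rfl)
    · exact h
    · exact le_rfl
  · intro w hw
    exact hw (by simp)

lemma isLUB_pair_of_le' {a b : P} (h : b ≤ a) : IsLUB ({a, b} : Set P) a := by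
  rw [Set.pair_comm]; exact isLUB_pair_of_le h

lemma isGLB_pair_of_le {a b : P} (h : a ≤ b) : IsGLB ({a, b} : Set P) a := by
  constructor
  · rintro t (rfl | rfl)
    · exact le_rfl
    · exact h
  · intro w hw
    exact hw (by simp)

lemma isGLB_pair_of_le' {a b : P} (h : b ≤ a) : IsGLB ({a, b} : Set P) b := by
  rw [Set.pair_comm]; exact isGLB_pair_of_le h

lemma isLUB_triple {a b m s z : P} (hs : IsLUB ({a, b} : Set P) s)
    (hz : IsLUB ({s, m} : Set P) z) : IsLUB ({a, b, m} : Set P) z := by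
  constructor
  · rintro w (rfl | rfl | rfl)
    · exact le_trans (hs.1 (by simp)) (hz.1 (by simp))
    · exact le_trans (hs.1 (by simp)) (hz.1 (by simp))
    · exact hz.1 (by simp)
  · intro w hw
    have h1 : a ≤ w := hw (by simp)
    have h2 : b ≤ w := hw (by simp)
    have h3 : m ≤ w := hw (by simp)
    have hsw : s ≤ w := hs.2 (mem_ub_pair.2 ⟨h1, h2⟩)
    exact hz.2 (mem_ub_pair.2 ⟨hsw, h3⟩)

lemma isGLB_of_isLUB_c (hinv : HasAntitoneInvol c) {x u w : P}
    (h : IsLUB ({c x, c u} : Set P) w) : IsGLB ({x, u} : Set P) (c w) := by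
  constructor
  · rintro t (rfl | rfl)
    · have := hinv.1 _ _ (h.1 (show c t ∈ ({c t, c u} : Set P) by simp))
      rwa [hinv.2] at this
    · have := hinv.1 _ _ (h.1 (show c t ∈ ({c x, c t} : Set P) by simp))
      rwa [hinv.2] at this
  · intro t ht
    have h1 : t ≤ x := ht (by simp)
    have h2 : t ≤ u := ht (by simp)
    have hw : w ≤ c t := h.2 (mem_ub_pair.2 ⟨hinv.1 _ _ h1, hinv.1 _ _ h2⟩)
    have := hinv.1 _ _ hw
    rwa [hinv.2] at this

lemma exists_maxLB (hlub : IsLubComplete (P := P)) (a b : P) :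
    ∃ m, m ∈ MaxE (lowerBounds ({a, b} : Set P)) := by
  obtain ⟨m, hm, -⟩ := hlub.1 {a, b} (Set.toFinite _) ⊥ (fun t _ => bot_le)
  exact ⟨m, hm⟩

lemma exists_minUB (hlub : IsLubComplete (P := P)) (a b : P) :
    ∃ m, m ∈ MinE (upperBounds ({a, b} : Set P)) := by
  obtain ⟨m, hm, -⟩ := hlub.2 {a, b} (Set.toFinite _) ⊤ (fun t _ => le_top)
  exact ⟨m, hm⟩

end Helpers


section ImpLemmas

variable {c : P → P}

lemma impC_nonempty (hlub : IsLubComplete (P := P)) (x y : P) : (impC c x y).Nonempty :=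
  (exists_minUB hlub (c x) y).imp fun _ h => h

lemma impS_nonempty (hinv : HasAntitoneInvol c) (horth : IsOrthogonalPoset c)
    (hlub : IsLubComplete (P := P)) (x y : P) : (impS c x y).Nonempty := by
  obtain ⟨w, hw⟩ := exists_maxLB hlub x y
  obtain ⟨z, hz⟩ := horth (c x) w (hinv.1 _ _ (mem_lb_pair.1 hw.1).1)
  exact ⟨z, w, hw, hz⟩

lemma impD_nonempty (hinv : HasAntitoneInvol c) (horth : IsOrthogonalPoset c)
    (hlub : IsLubComplete (P := P)) (x y : P) : (impD c x y).Nonempty := by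
  obtain ⟨w, hw⟩ := exists_maxLB hlub (c x) (c y)
  have hwy : y ≤ c w := by
    have := hinv.1 _ _ (mem_lb_pair.1 hw.1).2
    rwa [hinv.2] at this
  obtain ⟨z, hz⟩ := horth y w hwy
  exact ⟨z, w, hw, hz⟩

lemma impK_nonempty (hinv : HasAntitoneInvol c) (horth : IsOrthogonalPoset c)
    (hlub : IsLubComplete (P := P)) (x y : P) : (impK c x y).Nonempty := by
  obtain ⟨a, ha⟩ := exists_maxLB hlub (c x) y
  obtain ⟨b, hb⟩ := exists_maxLB hlub (c x) (c y)
  obtain ⟨u, hu⟩ := exists_minUB hlub (c x) y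
  have ha1 : a ≤ c x := (mem_lb_pair.1 ha.1).1
  have ha2 : a ≤ y := (mem_lb_pair.1 ha.1).2
  have hb1 : b ≤ c x := (mem_lb_pair.1 hb.1).1
  have hb2 : b ≤ c y := (mem_lb_pair.1 hb.1).2
  have hxu : c x ≤ u := (mem_ub_pair.1 hu.1).1
  obtain ⟨w0, hw0⟩ := horth (c x) (c u) (by rw [hinv.2]; exact hxu)
  have hm : IsGLB ({x, u} : Set P) (c w0) := isGLB_of_isLUB_c hinv hw0
  have hacb : a ≤ c b := by
    have := hinv.1 _ _ hb2
    rw [hinv.2] at this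
    exact le_trans ha2 this
  obtain ⟨s, hs⟩ := horth a b hacb
  have hmx : c w0 ≤ x := hm.1 (by simp)
  have hscm : s ≤ c (c w0) := le_trans (hs.2 (mem_ub_pair.2 ⟨ha1, hb1⟩)) (hinv.1 _ _ hmx)
  obtain ⟨z, hz⟩ := horth s (c w0) hscm
  exact ⟨z, a, ha, b, hb, u, hu, c w0, hm, isLUB_triple hs hz⟩

lemma impC_of_le {x t : P} (h : c x ≤ t) : impC c x t = ({t} : Set P) :=
  minE_pair h

lemma impS_of_le {x t : P} (hxt : x ≤ t) (h : IsLUB ({c x, x} : Set P) t) :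
    impS c x t = ({t} : Set P) := by
  refine Set.eq_singleton_iff_unique_mem.2 ⟨⟨x, by rw [maxE_pair hxt]; rfl, h⟩, ?_⟩
  rintro z ⟨w, hw, hz⟩
  rw [maxE_pair hxt, Set.mem_singleton_iff] at hw
  rw [hw] at hz
  exact hz.unique h

lemma impS_top (hinv : HasAntitoneInvol c) (t : P) : impS c ⊤ t = ({t} : Set P) := by
  have hbt : IsLUB ({c (⊤ : P), t} : Set P) t := by
    rw [c_top hinv]; exact isLUB_pair_of_le bot_le
  refine Set.eq_singleton_iff_unique_mem.2 ⟨⟨t, by rw [maxE_pair' le_top]; rfl, hbt⟩, ?_⟩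
  rintro z ⟨w, hw, hz⟩
  rw [maxE_pair' le_top, Set.mem_singleton_iff] at hw
  rw [hw] at hz
  exact hz.unique hbt

lemma impD_of_le (hinv : HasAntitoneInvol c) {x t : P} (hxt : x ≤ t) (h : c t ≤ t) :
    impD c x t = ({t} : Set P) := by
  have hct : c t ≤ c x := hinv.1 _ _ hxt
  have hlt : IsLUB ({t, c t} : Set P) t := isLUB_pair_of_le' h
  refine Set.eq_singleton_iff_unique_mem.2 ⟨⟨c t, by rw [maxE_pair' hct]; rfl, hlt⟩, ?_⟩
  rintro z ⟨w, hw, hz⟩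
  rw [maxE_pair' hct, Set.mem_singleton_iff] at hw
  rw [hw] at hz
  exact hz.unique hlt

lemma impD_top (hinv : HasAntitoneInvol c) (t : P) : impD c ⊤ t = ({t} : Set P) := by
  have hmax : MaxE (lowerBounds ({c (⊤ : P), c t} : Set P)) = ({⊥} : Set P) := by
    rw [c_top hinv]; exact maxE_pair bot_le
  have hlt : IsLUB ({t, (⊥ : P)} : Set P) t := isLUB_pair_of_le' bot_le
  refine Set.eq_singleton_iff_unique_mem.2 ⟨⟨⊥, by rw [hmax]; rfl, hlt⟩, ?_⟩
  rintro z ⟨w, hw, hz⟩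
  rw [hmax, Set.mem_singleton_iff] at hw
  rw [hw] at hz
  exact hz.unique hlt

lemma impK_top_left (hinv : HasAntitoneInvol c) (t : P) : impK c ⊤ t = ({t} : Set P) := by
  have e1 : MaxE (lowerBounds ({c (⊤ : P), t} : Set P)) = ({⊥} : Set P) := by
    rw [c_top hinv]; exact maxE_pair bot_le
  have e2 : MaxE (lowerBounds ({c (⊤ : P), c t} : Set P)) = ({⊥} : Set P) := by
    rw [c_top hinv]; exact maxE_pair bot_le
  have e3 : MinE (upperBounds ({c (⊤ : P), t} : Set P)) = ({t} : Set P) := by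
    rw [c_top hinv]; exact minE_pair bot_le
  have hglb : IsGLB ({(⊤ : P), t} : Set P) t := isGLB_pair_of_le' le_top
  have htr : IsLUB ({(⊥ : P), ⊥, t} : Set P) t := by
    constructor
    · rintro w (rfl | rfl | rfl)
      · exact bot_le
      · exact bot_le
      · exact le_rfl
    · intro w hw
      exact hw (by simp)
  refine Set.eq_singleton_iff_unique_mem.2
    ⟨⟨⊥, by rw [e1]; rfl, ⊥, by rw [e2]; rfl, t, by rw [e3]; rfl, t, hglb, htr⟩, ?_⟩
  rintro z ⟨a, ha, b, hb, u, hu, m, hm, hz⟩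
  rw [e1, Set.mem_singleton_iff] at ha
  rw [e2, Set.mem_singleton_iff] at hb
  rw [e3, Set.mem_singleton_iff] at hu
  rw [hu] at hm
  have hmt : m = t := hm.unique hglb
  rw [ha, hb, hmt] at hz
  exact hz.unique htr

lemma impK_top_right (hinv : HasAntitoneInvol c) {t : P} (h : c t ≤ t) :
    impK c t ⊤ = ({t} : Set P) := by
  have e1 : MaxE (lowerBounds ({c t, (⊤ : P)} : Set P)) = ({c t} : Set P) :=
    maxE_pair le_top
  have e2 : MaxE (lowerBounds ({c t, c (⊤ : P)} : Set P)) = ({⊥} : Set P) := by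
    rw [c_top hinv]; exact maxE_pair' bot_le
  have e3 : MinE (upperBounds ({c t, (⊤ : P)} : Set P)) = ({⊤} : Set P) :=
    minE_pair le_top
  have hglb : IsGLB ({t, (⊤ : P)} : Set P) t := isGLB_pair_of_le le_top
  have htr : IsLUB ({c t, (⊥ : P), t} : Set P) t := by
    constructor
    · rintro w (rfl | rfl | rfl)
      · exact h
      · exact bot_le
      · exact le_rfl
    · intro w hw
      exact hw (by simp)
  refine Set.eq_singleton_iff_unique_mem.2
    ⟨⟨c t, by rw [e1]; rfl, ⊥, by rw [e2]; rfl, ⊤, by rw [e3]; rfl, t, hglb, htr⟩, ?_⟩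
  rintro z ⟨a, ha, b, hb, u, hu, m, hm, hz⟩
  rw [e1, Set.mem_singleton_iff] at ha
  rw [e2, Set.mem_singleton_iff] at hb
  rw [e3, Set.mem_singleton_iff] at hu
  rw [hu] at hm
  have hmt : m = t := hm.unique hglb
  rw [ha, hb, hmt] at hz
  exact hz.unique htr

lemma impK_core (hinv : HasAntitoneInvol c) (horth : IsOrthogonalPoset c) {x y b : P}
    (hxy : x ≤ y) (hb : b ∈ impK c x y) : c b ≤ b := by
  obtain ⟨a, ha, bb, hbb, u, hu, m, hm, hz⟩ := hb
  have hcyx : c y ≤ c x := hinv.1 _ _ hxy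
  rw [maxE_pair' hcyx, Set.mem_singleton_iff] at hbb
  subst hbb
  have hyu : y ≤ u := (mem_ub_pair.1 hu.1).2
  have hxm : m = x := hm.unique (isGLB_pair_of_le (le_trans hxy hyu))
  rw [hxm] at hz
  have ha1 : a ≤ c x := (mem_lb_pair.1 ha.1).1
  have ha2 : a ≤ y := (mem_lb_pair.1 ha.1).2
  have hab : a ≤ b := hz.1 (by simp)
  have hcyb : c y ≤ b := hz.1 (by simp)
  have hxb : x ≤ b := hz.1 (by simp)
  have hcb1 : c b ≤ y := by
    have := hinv.1 _ _ hcyb; rwa [hinv.2] at this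
  have hcb2 : c b ≤ c x := hinv.1 _ _ hxb
  obtain ⟨t, ht⟩ := horth a (c b) (by rw [hinv.2]; exact hab)
  have ht1 : t ≤ c x := ht.2 (mem_ub_pair.2 ⟨ha1, hcb2⟩)
  have ht2 : t ≤ y := ht.2 (mem_ub_pair.2 ⟨ha2, hcb1⟩)
  have hta : t = a := ha.2 t (mem_lb_pair.2 ⟨ht1, ht2⟩) (ht.1 (by simp))
  calc c b ≤ t := ht.1 (by simp)
    _ = a := hta
    _ ≤ b := hab

end ImpLemmas

/-- for each of the five implications, modus ponens holds iff the order property holds. -/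
theorem stmt19 (c : P → P) (hinv : HasAntitoneInvol c) (horth : IsOrthogonalPoset c)
    (hlub : IsLubComplete (P := P)) :
    ∀ imp : P → P → Set P,
      (imp = impC c ∨ imp = impK c ∨ imp = impN c ∨ imp = impS c ∨ imp = impD c) →
      ((∀ x y u v : P, x ≤ y → (∀ a ∈ imp x y, ∀ b ∈ imp u v, a ≤ b) → u ≤ v) ↔
        (∀ x y : P, x ≤ y ↔ imp x y = {(⊤ : P)})) := by
  intro imp himp
  have hne : ∀ u v : P, (imp u v).Nonempty := by
    rcases himp with rfl | rfl | rfl | rfl | rfl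
    · exact impC_nonempty hlub
    · exact impK_nonempty hinv horth hlub
    · exact fun u v => impK_nonempty hinv horth hlub (c v) (c u)
    · exact impS_nonempty hinv horth hlub
    · exact impD_nonempty hinv horth hlub
  constructor
  · intro hmp x y
    constructor
    · intro hxy
      refine Set.eq_singleton_iff_nonempty_unique_mem.2 ⟨hne x y, ?_⟩
      rcases himp with rfl | rfl | rfl | rfl | rfl
      · -- Classical implication
        intro b hb
        have hcxb : c x ≤ b := (mem_ub_pair.1 hb.1).1
        have hyb : y ≤ b := (mem_ub_pair.1 hb.1).2
        have h1 : impC c x b = ({b} : Set P) := impC_of_le hcxb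
        have h2 : impC c ⊤ b = ({b} : Set P) := impC_of_le (by rw [c_top hinv]; exact bot_le)
        refine top_le_iff.1 (hmp x b ⊤ b (le_trans hxy hyb) ?_)
        rw [h1, h2]
        intro a' ha' b' hb'
        rw [Set.mem_singleton_iff] at ha' hb'
        subst ha'; subst hb'; exact le_rfl
      · -- Kalmbach implication
        intro b hb
        have hcb : c b ≤ b := impK_core hinv horth hxy hb
        have h1 : impK c b ⊤ = ({b} : Set P) := impK_top_right hinv hcb
        have h2 : impK c ⊤ b = ({b} : Set P) := impK_top_left hinv b
        refine top_le_iff.1 (hmp b ⊤ ⊤ b le_top ?_)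
        rw [h1, h2]
        intro a' ha' b' hb'
        rw [Set.mem_singleton_iff] at ha' hb'
        subst ha'; subst hb'; exact le_rfl
      · -- non-tollens implication
        intro b hb
        have hb' : b ∈ impK c (c y) (c x) := hb
        have hcb : c b ≤ b := impK_core hinv horth (hinv.1 _ _ hxy) hb'
        have h1 : impN c ⊥ (c b) = ({b} : Set P) := by
          show impK c (c (c b)) (c ⊥) = ({b} : Set P)
          rw [hinv.2, c_bot hinv]
          exact impK_top_right hinv hcb
        have h2 : impN c (c b) ⊥ = ({b} : Set P) := by
          show impK c (c ⊥) (c (c b)) = ({b} : Set P)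
          rw [hinv.2, c_bot hinv]
          exact impK_top_left hinv b
        have h3 : c b ≤ ⊥ := by
          refine hmp ⊥ (c b) (c b) ⊥ bot_le ?_
          rw [h1, h2]
          intro a' ha' b' hb'
          rw [Set.mem_singleton_iff] at ha' hb'
          subst ha'; subst hb'; exact le_rfl
        have h4 : c b = ⊥ := le_antisymm h3 bot_le
        have h5 := congrArg c h4
        rw [hinv.2, c_bot hinv] at h5
        exact h5
      · -- Sasaki implication
        intro b hb
        obtain ⟨w, hw, hz⟩ := hb
        rw [maxE_pair hxy, Set.mem_singleton_iff] at hw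
        rw [hw] at hz
        have hxb : x ≤ b := hz.1 (by simp)
        have h1 : impS c x b = ({b} : Set P) := impS_of_le hxb hz
        have h2 : impS c ⊤ b = ({b} : Set P) := impS_top hinv b
        refine top_le_iff.1 (hmp x b ⊤ b hxb ?_)
        rw [h1, h2]
        intro a' ha' b' hb'
        rw [Set.mem_singleton_iff] at ha' hb'
        subst ha'; subst hb'; exact le_rfl
      · -- Dishkant implication
        intro b hb
        obtain ⟨w, hw, hz⟩ := hb
        rw [maxE_pair' (hinv.1 _ _ hxy), Set.mem_singleton_iff] at hw
        rw [hw] at hz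
        have hyb : y ≤ b := hz.1 (by simp)
        have hcyb : c y ≤ b := hz.1 (by simp)
        have hcb : c b ≤ b := le_trans (hinv.1 _ _ hyb) hcyb
        have h1 : impD c x b = ({b} : Set P) := impD_of_le hinv (le_trans hxy hyb) hcb
        have h2 : impD c ⊤ b = ({b} : Set P) := impD_top hinv b
        refine top_le_iff.1 (hmp x b ⊤ b (le_trans hxy hyb) ?_)
        rw [h1, h2]
        intro a' ha' b' hb'
        rw [Set.mem_singleton_iff] at ha' hb'
        subst ha'; subst hb'; exact le_rfl
    · intro heq
      refine hmp x x x y le_rfl ?_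
      intro a _ b hb
      rw [heq, Set.mem_singleton_iff] at hb
      subst hb
      exact le_top
  · intro hord x y u v hxy h
    have hx : imp x y = ({⊤} : Set P) := (hord x y).1 hxy
    refine (hord u v).2 (Set.eq_singleton_iff_nonempty_unique_mem.2 ⟨hne u v, ?_⟩)
    intro b hb
    exact top_le_iff.1 (h ⊤ (by rw [hx]; rfl) b hb)
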